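/- Distinct-token self-division is one-way only: for distinct tokens t₁ ≠ t₂, rationals 0 < lo < hi, and dimension tag d, OneWayOnly (Div (Meas t₁ lo hi d) (Meas t₂ lo hi d)) (Exact 1 d) holds. -/

import Mathlib

abbrev Token := ℕ

inductive Dim where
  | base
deriving DecidableEq

inductive Expr where
  | Exact (q : ℚ) (d : Dim)
  | Meas (t : Token) (lo hi : ℚ) (d : Dim)
  | Add (a b : Expr)
  | Sub (a b : Expr)
  | Mul (a b : Expr)
  | Div (a b : Expr)
  | Neg (a : Expr)

abbrev TokenEnv := Token → ℚ

def TokenConsistent (σ : TokenEnv) : Expr → Prop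
  | .Exact _ _ => True
  | .Meas t lo hi _ => lo ≤ σ t ∧ σ t ≤ hi
  | .Add a b => TokenConsistent σ a ∧ TokenConsistent σ b
  | .Sub a b => TokenConsistent σ a ∧ TokenConsistent σ b
  | .Mul a b => TokenConsistent σ a ∧ TokenConsistent σ b
  | .Div a b => TokenConsistent σ a ∧ TokenConsistent σ b
  | .Neg a => TokenConsistent σ a

def eval (σ : TokenEnv) : Expr → ℚ
  | .Exact q _ => q
  | .Meas t _ _ _ => σ t
  | .Add a b => eval σ a + eval σ b
  | .Sub a b => eval σ a - eval σ b
  | .Mul a b => eval σ a * eval σ b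
  | .Div a b => eval σ a / eval σ b
  | .Neg a => - eval σ a

def Encl (e : Expr) : Set ℚ := {v : ℚ | ∃ σ : TokenEnv, TokenConsistent σ e ∧ eval σ e = v}

def RewritesTo (e e' : Expr) : Prop := Encl e' ⊆ Encl e

def Interchangeable (e e' : Expr) : Prop := Encl e = Encl e'

def OneWayOnly (e e' : Expr) : Prop := RewritesTo e e' ∧ ¬ RewritesTo e' e

theorem encl_exact (q : ℚ) (d : Dim) : Encl (.Exact q d) = {q} := by
  ext v
  simp [Encl, TokenConsistent, eval, eq_comm]

theorem rewritesTo_exact_iff {e : Expr} {q : ℚ} {d : Dim} :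
    RewritesTo e (.Exact q d) ↔ q ∈ Encl e := by
  rw [RewritesTo, encl_exact, Set.singleton_subset_iff]

/-- With distinct tokens the two measured leaves vary independently, so a quotient of
measured leaves encloses every quotient of a point of one interval by a point of the other. -/
theorem encl_div_meas_of_ne {t₁ t₂ : Token} (hne : t₁ ≠ t₂) (lo₁ hi₁ lo₂ hi₂ : ℚ)
    (d₁ d₂ : Dim) :
    Encl (.Div (.Meas t₁ lo₁ hi₁ d₁) (.Meas t₂ lo₂ hi₂ d₂)) =
      Set.image2 (· / ·) (Set.Icc lo₁ hi₁) (Set.Icc lo₂ hi₂) := by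
  ext v
  constructor
  · rintro ⟨σ, ⟨h₁, h₂⟩, rfl⟩
    exact ⟨σ t₁, h₁, σ t₂, h₂, rfl⟩
  · rintro ⟨x, hx, y, hy, rfl⟩
    refine ⟨Function.update (fun _ => y) t₁ x, ⟨?_, ?_⟩, ?_⟩ <;>
      simp_all [TokenConsistent, eval, Function.update_of_ne hne.symm]

theorem distinct_token_division_one_way_only_to_exact_one_positive
    (t₁ t₂ : Token) (hne : t₁ ≠ t₂) (lo hi : ℚ) (hpos : 0 < lo) (hlt : lo < hi) (d : Dim) :
    OneWayOnly (.Div (.Meas t₁ lo hi d) (.Meas t₂ lo hi d)) (.Exact 1 d) := by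
  have hlo : lo ∈ Set.Icc lo hi := ⟨le_rfl, hlt.le⟩
  have hhi : hi ∈ Set.Icc lo hi := ⟨hlt.le, le_rfl⟩
  refine ⟨?_, fun h => ?_⟩
  · rw [rewritesTo_exact_iff, encl_div_meas_of_ne hne]
    exact ⟨lo, hlo, lo, hlo, div_self hpos.ne'⟩
  · have hmem : lo / hi ∈ Encl (.Exact 1 d) :=
      h (by rw [encl_div_meas_of_ne hne]; exact Set.mem_image2_of_mem hlo hhi)
    rw [encl_exact, Set.mem_singleton_iff, div_eq_one_iff_eq (hpos.trans hlt).ne'] at hmem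
    exact hlt.ne hmem
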